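/- arXiv:2307.11967 — 6 statements merged into one kernel-verified Lean document; each statement's English description precedes it below -/
import Mathlib

section
/- A mechanism M = (f, p) is incentive-compatible and nonbossy if and only if it is robust with secondary goals (RwSG). -/
/-!
Statement 0: A mechanism M = (f, p) is incentive-compatible and nonbossy
if and only if it is robust with secondary goals (RwSG).
-/

open Function

variable {n : ℕ} {O : Fin n → Type*}

/-- Incentive-compatibility: truthful reporting yields a strictly larger utility,
or an equal utility with a weakly tiebreak-preferred personal outcome. -/
def IsIC (V : ∀ i, Set (O i → ℝ)) (tb : ∀ i, O i → O i → Prop)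
    (f : (∀ i, O i → ℝ) → ∀ i, O i) (p : (∀ i, O i → ℝ) → Fin n → ℝ) : Prop :=
  ∀ (i : Fin n) (v : ∀ j, O j → ℝ), (∀ j, v j ∈ V j) → ∀ vi' ∈ V i,
    v i (f v i) - p v i > v i (f (update v i vi') i) - p (update v i vi') i ∨
    (v i (f v i) - p v i = v i (f (update v i vi') i) - p (update v i vi') i ∧
      (f v i = f (update v i vi') i ∨ tb i (f v i) (f (update v i vi') i)))

/-- Nonbossiness: an agent cannot change anyone's outcome or payment without
changing their own personal outcome or payment. -/
def IsNB (V : ∀ i, Set (O i → ℝ))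
    (f : (∀ i, O i → ℝ) → ∀ i, O i) (p : (∀ i, O i → ℝ) → Fin n → ℝ) : Prop :=
  ∀ (i : Fin n) (v : ∀ j, O j → ℝ), (∀ j, v j ∈ V j) → ∀ vi' ∈ V i,
    f v i = f (update v i vi') i → p v i = p (update v i vi') i →
    f v = f (update v i vi') ∧ p v = p (update v i vi')

/-- Agent `i`'s internal strict preference over (personal outcome, payment) pairs,
induced by a valuation `vi` and a tiebreaking order `tb`. -/
def IntBetter {Oi : Type*} (tb : Oi → Oi → Prop) (vi : Oi → ℝ) (a b : Oi × ℝ) : Prop :=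
  vi a.1 - a.2 > vi b.1 - b.2 ∨ (vi a.1 - a.2 = vi b.1 - b.2 ∧ tb a.1 b.1)

/-- Robustness with secondary goals: for every external preference (an arbitrary
total order over other agents' outcomes and payments), truthful reporting is weakly
better in the induced lexicographic preference. -/
def IsRwSG (V : ∀ i, Set (O i → ℝ)) (tb : ∀ i, O i → O i → Prop)
    (f : (∀ i, O i → ℝ) → ∀ i, O i) (p : (∀ i, O i → ℝ) → Fin n → ℝ) : Prop :=
  ∀ (i : Fin n) (v : ∀ j, O j → ℝ), (∀ j, v j ∈ V j) → ∀ vi' ∈ V i,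
    ∀ ext : ((∀ j : {j : Fin n // j ≠ i}, O j.1) × ({j : Fin n // j ≠ i} → ℝ)) →
            ((∀ j : {j : Fin n // j ≠ i}, O j.1) × ({j : Fin n // j ≠ i} → ℝ)) → Prop,
      IsLinearOrder _ ext →
      (IntBetter (tb i) (v i) (f v i, p v i)
          (f (update v i vi') i, p (update v i vi') i) ∨
        ((f v i, p v i) = (f (update v i vi') i, p (update v i vi') i) ∧
          ext (fun j => f v j.1, fun j => p v j.1)
              (fun j => f (update v i vi') j.1, fun j => p (update v i vi') j.1)))

/-!
IC says that the truthful report is internally weakly better, with equality only when agent `i`'s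
own outcome and payment are unchanged; nonbossiness then leaves everyone else's outcome and
payment unchanged too, so every external order is satisfied by reflexivity. Conversely, RwSG
against any single linear external order contains IC; and when a deviation leaves `i`'s own
pair fixed, RwSG applied to the deviation and to its reversal with the same external order gives
the external comparison in both directions, so antisymmetry yields nonbossiness.
-/

def othersPart (i : Fin n) (o : ∀ j, O j) (q : Fin n → ℝ) :
    (∀ j : {j : Fin n // j ≠ i}, O j.1) × ({j : Fin n // j ≠ i} → ℝ) :=
  (fun j => o j.1, fun j => q j.1)

theorem eq_of_apply_eq_of_othersPart_eq {i : Fin n} {o o' : ∀ j, O j} {q q' : Fin n → ℝ}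
    (ho : o i = o' i) (hq : q i = q' i) (h : othersPart i o q = othersPart i o' q') :
    o = o' ∧ q = q' := by
  simp only [othersPart, Prod.mk.injEq, funext_iff, Subtype.forall] at h
  constructor <;> funext j <;> rcases eq_or_ne j i with rfl | hj
  exacts [ho, h.1 j hj, hq, h.2 j hj]

theorem not_intBetter_self {Oi : Type*} {tb : Oi → Oi → Prop} [Std.Irrefl tb] (vi : Oi → ℝ)
    (a : Oi × ℝ) : ¬ IntBetter tb vi a a :=
  fun h => h.elim (lt_irrefl _) fun h => irrefl _ h.2

theorem exists_isLinearOrder (α : Type*) : ∃ r : α → α → Prop, IsLinearOrder α r :=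
  letI := IsWellOrder.linearOrder (@WellOrderingRel α)
  ⟨(· ≤ ·), inferInstance⟩

section

variable {V : ∀ i, Set (O i → ℝ)} {tb : ∀ i, O i → O i → Prop}
  {f : (∀ i, O i → ℝ) → ∀ i, O i} {p : (∀ i, O i → ℝ) → Fin n → ℝ}

theorem isRwSG_of_isIC_of_isNB (hIC : IsIC V tb f p) (hNB : IsNB V f p) : IsRwSG V tb f p := by
  intro i v hv vi' hvi' ext hext
  rcases hIC i v hv vi' hvi' with hgt | ⟨heq, hf | htb⟩
  · exact Or.inl (Or.inl hgt)
  · have hp : p v i = p (update v i vi') i := by rw [hf] at heq; linarith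
    obtain ⟨hf', hp'⟩ := hNB i v hv vi' hvi' hf hp
    refine Or.inr ⟨by rw [hf, hp], ?_⟩
    rw [hf', hp']
    exact refl_of ext _
  · exact Or.inl (Or.inr ⟨heq, htb⟩)

theorem IsRwSG.isIC (h : IsRwSG V tb f p) : IsIC V tb f p := by
  intro i v hv vi' hvi'
  obtain ⟨ext, hext⟩ := exists_isLinearOrder _
  rcases h i v hv vi' hvi' ext hext with (hgt | ⟨heq, htb⟩) | ⟨hown, -⟩
  · exact Or.inl hgt
  · exact Or.inr ⟨heq, Or.inr htb⟩
  · obtain ⟨hf, hp⟩ := Prod.mk.inj hown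
    exact Or.inr ⟨by rw [hf, hp], Or.inl hf⟩

theorem IsRwSG.othersPart_le (h : IsRwSG V tb f p) {i : Fin n} [Std.Irrefl (tb i)]
    {v : ∀ j, O j → ℝ} (hv : ∀ j, v j ∈ V j) {vi' : O i → ℝ} (hvi' : vi' ∈ V i)
    (hf : f v i = f (update v i vi') i) (hp : p v i = p (update v i vi') i)
    (ext : _ → _ → Prop) (hext : IsLinearOrder _ ext) :
    ext (othersPart i (f v) (p v)) (othersPart i (f (update v i vi')) (p (update v i vi'))) := by
  rcases h i v hv vi' hvi' ext hext with hbetter | ⟨-, hle⟩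
  · rw [hf, hp] at hbetter
    exact absurd hbetter (not_intBetter_self _ _)
  · exact hle

theorem IsRwSG.isNB (h : IsRwSG V tb f p) (htb : ∀ i, Std.Irrefl (tb i)) : IsNB V f p := by
  intro i v hv vi' hvi' hf hp
  have := htb i
  obtain ⟨ext, hext⟩ := exists_isLinearOrder _
  have hv' : ∀ j, update v i vi' j ∈ V j :=
    Set.mem_univ_pi.1 ((Set.update_mem_pi_iff_of_mem (Set.mem_univ_pi.2 hv)).2 fun _ => hvi')
  have hback : update (update v i vi') i (v i) = v := by rw [update_idem, update_eq_self]
  have hle := h.othersPart_le hv hvi' hf hp ext hext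
  have hge := h.othersPart_le hv' (hv i) (by rw [hback, hf]) (by rw [hback, hp]) ext hext
  rw [hback] at hge
  exact eq_of_apply_eq_of_othersPart_eq hf hp (antisymm hle hge)

end

theorem ic_and_nb_iff_rwsg_general
    (V : ∀ i, Set (O i → ℝ))
    (tb : ∀ i, O i → O i → Prop) (htb : ∀ i, IsStrictTotalOrder (O i) (tb i))
    (f : (∀ i, O i → ℝ) → ∀ i, O i) (p : (∀ i, O i → ℝ) → Fin n → ℝ) :
    (IsIC V tb f p ∧ IsNB V f p) ↔ IsRwSG V tb f p :=
  ⟨fun ⟨hIC, hNB⟩ => isRwSG_of_isIC_of_isNB hIC hNB,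
    fun h => ⟨h.isIC, h.isNB fun i => (htb i).toIsStrictOrder.toIrrefl⟩⟩

/-- A mechanism is IC and nonbossy if and only if it is robust with secondary goals. -/
theorem ic_and_nb_iff_rwsg
    (V : ∀ i, Set (O i → ℝ)) (Feas : Set (∀ i, O i))
    (tb : ∀ i, O i → O i → Prop) (htb : ∀ i, IsStrictTotalOrder (O i) (tb i))
    (f : (∀ i, O i → ℝ) → ∀ i, O i) (p : (∀ i, O i → ℝ) → Fin n → ℝ)
    (hfeas : ∀ v : ∀ j, O j → ℝ, (∀ j, v j ∈ V j) → f v ∈ Feas)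
    (hp : ∀ v : ∀ j, O j → ℝ, (∀ j, v j ∈ V j) → ∀ i, 0 ≤ p v i) :
    (IsIC V tb f p ∧ IsNB V f p) ↔ IsRwSG V tb f p :=
  ic_and_nb_iff_rwsg_general V tb htb f p
end

section
/- Payment characterization: if for every agent i the pair (𝒱ᵢ, 𝒪ᵢ) has the upper semilattice property, then for any incentive-compatible and nonbossy mechanism M = (f, p), and any two valuation profiles v, v' ∈ 𝒱 with f(v) = f(v'), it holds that p(v) = p(v'). -/
/-!
Statement 2: Payment characterization. If every pair (𝒱ᵢ, 𝒪ᵢ) has the upper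
semilattice property, then for any IC and nonbossy mechanism, the payments are
a function of the outcome vector only.
-/

open Function

variable {n : ℕ} {O : Fin n → Type*}

/-- The upper semilattice property of a pair (𝒱ᵢ, 𝒪ᵢ). -/
def UpperSemilatticeProperty {Oi : Type*} (Vi : Set (Oi → ℝ)) : Prop :=
  ∀ oi : Oi, ∀ vi ∈ Vi, ∀ vi' ∈ Vi, ∃ vi'' ∈ Vi, ∀ oi' : Oi,
    vi'' oi - vi'' oi' ≥ max (vi oi - vi oi') (vi' oi - vi' oi')

/-- Step lemma: replacing an agent's valuation by one that dominates it at the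
current outcome leaves the whole outcome and payment vectors unchanged. -/
lemma step_lemma
    (V : ∀ i, Set (O i → ℝ)) (tb : ∀ i, O i → O i → Prop)
    (htb : ∀ i, IsStrictTotalOrder (O i) (tb i))
    (f : (∀ i, O i → ℝ) → ∀ i, O i) (p : (∀ i, O i → ℝ) → Fin n → ℝ)
    (hIC : IsIC V tb f p) (hNB : IsNB V f p)
    (w : ∀ j, O j → ℝ) (hw : ∀ j, w j ∈ V j) (i : Fin n)
    (vi'' : O i → ℝ) (hvi'' : vi'' ∈ V i)
    (hdom : ∀ o', vi'' (f w i) - vi'' o' ≥ w i (f w i) - w i o') :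
    f (update w i vi'') = f w ∧ p (update w i vi'') = p w := by
  set w'' := update w i vi'' with hw''def
  have hw''mem : ∀ j, w'' j ∈ V j := by
    intro j
    rcases eq_or_ne j i with rfl | h
    · simpa [hw''def] using hvi''
    · simpa [hw''def, update_of_ne h] using hw j
  have hback : update w'' i (w i) = w := by
    rw [hw''def, update_idem, update_eq_self]
  have h1 := hIC i w hw vi'' hvi''
  have h2 := hIC i w'' hw''mem (w i) (hw i)
  rw [hback] at h2
  have hwieq : w'' i = vi'' := by rw [hw''def, update_self]
  rw [hwieq] at h2
  set oi := f w i with hoi_def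
  set o'' := f w'' i with ho''_def
  have hd := hdom o''
  have hCD : w i oi - p w i ≥ w i o'' - p w'' i := by
    rcases h1 with h | ⟨h, _⟩ <;> linarith
  have h2eq : vi'' o'' - p w'' i = vi'' oi - p w i ∧ (o'' = oi ∨ tb i o'' oi) := by
    rcases h2 with h | h
    · exfalso; linarith
    · exact h
  have h1eq : w i oi - p w i = w i o'' - p w'' i ∧ (oi = o'' ∨ tb i oi o'') := by
    rcases h1 with h | h
    · exfalso; linarith [h2eq.1]
    · exact h
  have hoi : oi = o'' := by
    rcases h1eq.2 with h | hab
    · exact h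
    rcases h2eq.2 with h | hba
    · exact h.symm
    · exfalso
      haveI := htb i
      exact absurd (_root_.trans hab hba) (irrefl_of (tb i) oi)
  have hpi : p w i = p w'' i := by
    have h := h1eq.1
    rw [← hoi] at h
    linarith
  have hnb := hNB i w hw vi'' hvi''
  have h := hnb hoi hpi
  exact ⟨h.1.symm, h.2.symm⟩

/-- Payment characterization: if every (𝒱ᵢ, 𝒪ᵢ) has the upper semilattice property
then an IC and nonbossy mechanism charges equal payments at any two valuation
profiles with equal outcomes. -/
theorem payment_characterization
    (V : ∀ i, Set (O i → ℝ)) (Feas : Set (∀ i, O i))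
    (tb : ∀ i, O i → O i → Prop) (htb : ∀ i, IsStrictTotalOrder (O i) (tb i))
    (f : (∀ i, O i → ℝ) → ∀ i, O i) (p : (∀ i, O i → ℝ) → Fin n → ℝ)
    (hfeas : ∀ v : ∀ j, O j → ℝ, (∀ j, v j ∈ V j) → f v ∈ Feas)
    (hp : ∀ v : ∀ j, O j → ℝ, (∀ j, v j ∈ V j) → ∀ i, 0 ≤ p v i)
    (husl : ∀ i, UpperSemilatticeProperty (V i))
    (hIC : IsIC V tb f p) (hNB : IsNB V f p)
    (v v' : ∀ j, O j → ℝ) (hv : ∀ j, v j ∈ V j) (hv' : ∀ j, v' j ∈ V j)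
    (hf : f v = f v') :
    p v = p v' := by
  choose v'' hmem hdom using fun i => husl i (f v i) (v i) (hv i) (v' i) (hv' i)
  have key : ∀ (u : ∀ j, O j → ℝ), (∀ j, u j ∈ V j) → f u = f v →
      (∀ i o', v'' i (f v i) - v'' i o' ≥ u i (f v i) - u i o') →
      p v'' = p u := by
    intro u hu hfu hdomu
    have H : ∀ s : Finset (Fin n),
        f (fun j => if j ∈ s then v'' j else u j) = f u ∧
        p (fun j => if j ∈ s then v'' j else u j) = p u ∧
        (∀ j, (if j ∈ s then v'' j else u j) ∈ V j) := by
      intro s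
      induction s using Finset.induction with
      | empty =>
        refine ⟨by simp, by simp, fun j => by simpa using hu j⟩
      | @insert i s hi ih =>
        obtain ⟨hf1, hp1, hmem1⟩ := ih
        set wold := fun j => if j ∈ s then v'' j else u j with hwold
        have heq : (fun j => if j ∈ insert i s then v'' j else u j)
            = update wold i (v'' i) := by
          funext j
          rcases eq_or_ne j i with rfl | h
          · simp [hwold, update_self]
          · simp [hwold, update_of_ne h, Finset.mem_insert, h]
        have hwi : wold i = u i := by simp [hwold, hi]
        have hdomi : ∀ o', v'' i (f wold i) - v'' i o'
            ≥ wold i (f wold i) - wold i o' := by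
          intro o'
          rw [hf1, hfu, hwi]
          exact hdomu i o'
        obtain ⟨hf2, hp2⟩ := step_lemma V tb htb f p hIC hNB wold hmem1 i
          (v'' i) (hmem i) hdomi
        rw [heq]
        refine ⟨hf2.trans hf1, hp2.trans hp1, fun j => ?_⟩
        by_cases h : j ∈ insert i s <;> simp [h, hmem j, hu j]
    have := (H Finset.univ).2.1
    simpa using this
  have hdomv : ∀ i o', v'' i (f v i) - v'' i o' ≥ v i (f v i) - v i o' :=
    fun i o' => le_trans (le_max_left _ _) (hdom i o')
  have hdomv' : ∀ i o', v'' i (f v i) - v'' i o' ≥ v' i (f v i) - v' i o' :=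
    fun i o' => le_trans (le_max_right _ _) (hdom i o')
  have h1 := key v hv rfl hdomv
  have h2 := key v' hv' hf.symm hdomv'
  exact h1.symm.trans h2
end

section
/- There exists an environment (one can take n = 2 agents, personal outcome spaces 𝒪₁ = 𝒪₂ a common 3-element set with 𝒪 the diagonal, and two-element valuation spaces 𝒱₁, 𝒱₂) together with tiebreaking orders and a mechanism M = (f, p) that is incentive-compatible, individually rational, and nonbossy, and two valuation profiles v, v' ∈ 𝒱 such that f(v) = f(v') but p(v) ≠ p(v'); i.e., the payment characterization fails without the upper semilattice property. -/
/-!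
Statement 9: There exists an environment (two agents, a common 3-element outcome
set with the diagonal feasible set, two-element valuation spaces), tiebreaking
orders, and an IC, IR and nonbossy mechanism, together with two valuation
profiles with equal outcomes but different payments; i.e., the payment
characterization fails without the upper semilattice property.
-/

open Function

lemma profile_eq_aux (v : Fin 2 → Fin 3 → ℝ) : v = ![v 0, v 1] := by
  funext j; fin_cases j <;> rfl


variable {n : ℕ} {O : Fin n → Type*}

/-- Individual rationality. -/
def IsIR (V : ∀ i, Set (O i → ℝ))
    (f : (∀ i, O i → ℝ) → ∀ i, O i) (p : (∀ i, O i → ℝ) → Fin n → ℝ) : Prop :=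
  ∀ (v : ∀ j, O j → ℝ), (∀ j, v j ∈ V j) → ∀ i, 0 ≤ v i (f v i) - p v i

/-- Without the upper semilattice property, the payment characterization fails:
there is an environment with 2 agents, a common 3-element outcome space (with the
diagonal as the feasible set), two-element valuation spaces, tiebreaking orders,
and an IC, IR, nonbossy mechanism whose payments are not a function of the
outcome vector. -/
theorem payment_characterization_fails :
    ∃ (V : Fin 2 → Set (Fin 3 → ℝ)) (tb : Fin 2 → Fin 3 → Fin 3 → Prop)
      (f : ((i : Fin 2) → Fin 3 → ℝ) → Fin 2 → Fin 3)
      (p : ((i : Fin 2) → Fin 3 → ℝ) → Fin 2 → ℝ),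
      (∀ i, (V i).ncard = 2) ∧
      (∀ i, IsStrictTotalOrder (Fin 3) (tb i)) ∧
      (∀ v : Fin 2 → Fin 3 → ℝ, (∀ j, v j ∈ V j) → ∀ i i', f v i = f v i') ∧
      (∀ v : Fin 2 → Fin 3 → ℝ, (∀ j, v j ∈ V j) → ∀ i, 0 ≤ p v i) ∧
      IsIC V tb f p ∧ IsIR V f p ∧ IsNB V f p ∧
      ∃ v v' : Fin 2 → Fin 3 → ℝ, (∀ j, v j ∈ V j) ∧ (∀ j, v' j ∈ V j) ∧
        f v = f v' ∧ p v ≠ p v' := by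
  classical
  refine ⟨![{![(1:ℝ),1,0], ![2,0,3]}, {![(1:ℝ),0,1], ![2,3,0]}],
    fun _ => (· < ·),
    fun v _ => if v 0 0 = 1 then (if v 1 1 = 0 then 0 else 1)
               else (if v 1 1 = 0 then 2 else 0),
    fun v _ => if v 0 0 = 1 ∨ v 1 1 = 0 then 0 else 1,
    ?_, ?_, ?_, ?_, ?_, ?_, ?_, ?_⟩
  · intro i
    fin_cases i
    · show ({![(1:ℝ),1,0], ![2,0,3]} : Set (Fin 3 → ℝ)).ncard = 2
      rw [Set.ncard_pair]
      intro h; have := congrFun h 1; norm_num at this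
    · show ({![(1:ℝ),0,1], ![2,3,0]} : Set (Fin 3 → ℝ)).ncard = 2
      rw [Set.ncard_pair]
      intro h; have := congrFun h 1; norm_num at this
  · intro i; infer_instance
  · intro v _ i i'; rfl
  · intro v _ i; dsimp only; split <;> norm_num
  · -- IC
    intro i v hv vi' hvi'
    have h0 := hv 0
    have h1 := hv 1
    rw [profile_eq_aux v]
    fin_cases i <;>
      simp only [Matrix.cons_val_zero, Matrix.cons_val_one, Matrix.head_cons,
        Set.mem_insert_iff, Set.mem_singleton_iff] at h0 h1 hvi' <;>
      rcases h0 with h0 | h0 <;> rcases h1 with h1 | h1 <;>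
      rcases hvi' with h' | h' <;> rw [h0, h1, h'] <;>
      norm_num [Function.update_apply, Matrix.cons_val_zero, Matrix.cons_val_one,
        Matrix.head_cons, Matrix.cons_val_two, Matrix.tail_cons]
  · -- IR
    intro v hv i
    have h0 := hv 0
    have h1 := hv 1
    rw [profile_eq_aux v]
    simp only [Matrix.cons_val_zero, Matrix.cons_val_one, Matrix.head_cons,
      Set.mem_insert_iff, Set.mem_singleton_iff] at h0 h1
    fin_cases i <;> rcases h0 with h0 | h0 <;> rcases h1 with h1 | h1 <;>
      rw [h0, h1] <;>
      norm_num [Matrix.cons_val_zero, Matrix.cons_val_one,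
        Matrix.head_cons, Matrix.cons_val_two, Matrix.tail_cons]
  · -- NB
    intro i v hv vi' hvi'
    have h0 := hv 0
    have h1 := hv 1
    rw [profile_eq_aux v]
    fin_cases i <;>
      simp only [Matrix.cons_val_zero, Matrix.cons_val_one, Matrix.head_cons,
        Set.mem_insert_iff, Set.mem_singleton_iff] at h0 h1 hvi' <;>
      rcases h0 with h0 | h0 <;> rcases h1 with h1 | h1 <;>
      rcases hvi' with h' | h' <;> rw [h0, h1, h'] <;>
      norm_num [Function.update_apply, Matrix.cons_val_zero, Matrix.cons_val_one,
        Matrix.head_cons, Matrix.cons_val_two, Matrix.tail_cons] <;>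
      decide
  · -- counterexample profiles
    refine ⟨![![(1:ℝ),1,0], ![(1:ℝ),0,1]], ![![(2:ℝ),0,3], ![(2:ℝ),3,0]], ?_, ?_, ?_, ?_⟩
    · intro j; fin_cases j <;> simp
    · intro j; fin_cases j <;> simp
    · funext i; norm_num
    · intro h
      have := congrFun h 0
      norm_num at this
end

section
/- Decision-list characterization: let M = (f, p) be an incentive-compatible, individually rational, and nonbossy mechanism in a single-parameter environment with feasible outcome set 𝒪 ⊆ {0,1}ⁿ of size k. Then there exist a payment vector q(o) ∈ (ℝ≥0)ⁿ for each o ∈ 𝒪 with qᵢ(o) = 0 whenever oᵢ = 0, an exception list E(o) ⊆ 𝒪 for each o ∈ 𝒪, and an enumeration o⁽¹⁾, …, o⁽ᵏ⁾ of 𝒪, such that for every v ∈ (ℝ≥0)ⁿ, f(v) = o⁽ʲ⁾ and p(v) = q(o⁽ʲ⁾), where j = min{ j' ∈ [k] : v satisfies o⁽ʲ'⁾ and v does not satisfy any o ∈ E(o⁽ʲ'⁾) }. Moreover, the exception lists can be chosen so that the order does not matter: for every v there is exactly one index j' ∈ [k] such that v satisfies o⁽ʲ'⁾ and v satisfies no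 outcome in E(o⁽ʲ'⁾). -/
/-!
IC and IR make a loser pay nothing and a winner pay at most her value; moreover a winner keeps
winning at the same price when her value moves anywhere above that price, and a loser keeps losing
when her value decreases. Nonbossiness upgrades these one-agent facts to the whole outcome and
payment vector, so moving winners above their prices and losers down, one agent at a time, changes
neither `f` nor `p`. Applied to `p v ⊔ p w`, this shows that `f v = f w` and `p v = p w` as soon as
each of `v`, `w` satisfies the other's payment vector, or as soon as `f v = f w`. So the payment
`q(o)` of an outcome is well defined, and with `E(o)` the outcomes `f w ≠ o` of profiles `w`
satisfying `q(o)`, a profile `v` passes the test of the list exactly at `f v`.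
-/

open Function NNReal

/-- Quasilinear utility of agent `i` with value `vi`, allocation `S` (agent `i`
receives an item iff `i ∈ S`) and payment `qi`. -/
noncomputable def utility {n : ℕ} (vi : ℝ≥0) (i : Fin n) (S : Finset (Fin n))
    (qi : ℝ≥0) : ℝ :=
  (if i ∈ S then (vi : ℝ) else 0) - (qi : ℝ)

/-- Incentive-compatibility in a single-parameter environment, where ties are
broken in favor of receiving an item. -/
def SPIC {n : ℕ} (f : (Fin n → ℝ≥0) → Finset (Fin n))
    (p : (Fin n → ℝ≥0) → Fin n → ℝ≥0) : Prop :=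
  ∀ (v : Fin n → ℝ≥0) (i : Fin n) (x : ℝ≥0),
    utility (v i) i (f v) (p v i) >
      utility (v i) i (f (update v i x)) (p (update v i x) i) ∨
    (utility (v i) i (f v) (p v i) =
      utility (v i) i (f (update v i x)) (p (update v i x) i) ∧
      (i ∈ f (update v i x) → i ∈ f v))

/-- Individual rationality. -/
def SPIR {n : ℕ} (f : (Fin n → ℝ≥0) → Finset (Fin n))
    (p : (Fin n → ℝ≥0) → Fin n → ℝ≥0) : Prop :=
  ∀ (v : Fin n → ℝ≥0) (i : Fin n), 0 ≤ utility (v i) i (f v) (p v i)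

/-- Nonbossiness: no agent can change the outcome or payments of others without
changing their own allocation or payment. -/
def SPNB {n : ℕ} (f : (Fin n → ℝ≥0) → Finset (Fin n))
    (p : (Fin n → ℝ≥0) → Fin n → ℝ≥0) : Prop :=
  ∀ (v : Fin n → ℝ≥0) (i : Fin n) (x : ℝ≥0),
    (i ∈ f v ↔ i ∈ f (update v i x)) → p v i = p (update v i x) i →
    f v = f (update v i x) ∧ p v = p (update v i x)

/-- A valuation vector `v` satisfies an outcome with associated payment vector
`q` if every agent's value is at least their payment. -/
def Sat {n : ℕ} (v : Fin n → ℝ≥0) (q : Fin n → ℝ≥0) : Prop := ∀ i, q i ≤ v i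

lemma utility_of_mem {n : ℕ} {vi qi : ℝ≥0} {i : Fin n} {S : Finset (Fin n)} (h : i ∈ S) :
    utility vi i S qi = vi - qi := by
  simp [utility, h]

lemma utility_of_notMem {n : ℕ} {vi qi : ℝ≥0} {i : Fin n} {S : Finset (Fin n)} (h : i ∉ S) :
    utility vi i S qi = -qi := by
  simp [utility, h]

section Mechanism

variable {n : ℕ} {f : (Fin n → ℝ≥0) → Finset (Fin n)} {p : (Fin n → ℝ≥0) → Fin n → ℝ≥0}
  {v w r : Fin n → ℝ≥0} {i : Fin n} {x : ℝ≥0}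

namespace SPIR

lemma payment_eq_zero (hIR : SPIR f p) (h : i ∉ f v) : p v i = 0 := by
  have := hIR v i
  rw [utility_of_notMem h] at this
  exact_mod_cast le_antisymm (neg_nonneg.mp this) (p v i).2

lemma payment_le (hIR : SPIR f p) (h : i ∈ f v) : p v i ≤ v i := by
  have := hIR v i
  rw [utility_of_mem h] at this
  exact_mod_cast sub_nonneg.mp this

lemma sat (hIR : SPIR f p) (v : Fin n → ℝ≥0) : Sat v (p v) := fun i ↦ by
  by_cases h : i ∈ f v
  · exact hIR.payment_le h
  · simp [hIR.payment_eq_zero h]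

end SPIR

namespace SPIC

lemma utility_update_le (hIC : SPIC f p) (v : Fin n → ℝ≥0) (i : Fin n) (x : ℝ≥0) :
    utility (v i) i (f (update v i x)) (p (update v i x) i) ≤ utility (v i) i (f v) (p v i) := by
  rcases hIC v i x with h | h
  · exact h.le
  · exact h.1.ge

lemma mem_of_utility_le_update (hIC : SPIC f p) (h : i ∈ f (update v i x))
    (hle : utility (v i) i (f v) (p v i) ≤
      utility (v i) i (f (update v i x)) (p (update v i x) i)) : i ∈ f v := by
  rcases hIC v i x with hlt | ⟨-, htie⟩
  · exact absurd hlt hle.not_gt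
  · exact htie h

lemma notMem_update (hIC : SPIC f p) (hIR : SPIR f p) (h : i ∉ f v) (hx : x ≤ v i) :
    i ∉ f (update v i x) := by
  intro h'
  have hpay : p (update v i x) i ≤ x := by simpa using hIR.payment_le h'
  refine h (hIC.mem_of_utility_le_update h' ?_)
  rw [utility_of_notMem h, utility_of_mem h', hIR.payment_eq_zero h]
  have : (p (update v i x) i : ℝ) ≤ v i := by exact_mod_cast hpay.trans hx
  linarith

-- If `i` lost at `update v i x`, deviating back to `v i` would win at price `p v i ≤ x`.
lemma mem_update (hIC : SPIC f p) (hIR : SPIR f p) (h : i ∈ f v) (hx : p v i ≤ x) :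
    i ∈ f (update v i x) := by
  by_contra h'
  have hback : update (update v i x) i (v i) = v := by simp
  apply h'
  refine hIC.mem_of_utility_le_update (x := v i) (by rwa [hback]) ?_
  rw [hback, utility_of_notMem h', utility_of_mem h, hIR.payment_eq_zero h']
  have : (p v i : ℝ) ≤ x := by exact_mod_cast hx
  simp only [update_self]
  linarith

lemma payment_update_eq (hIC : SPIC f p) (h : i ∈ f v) (h' : i ∈ f (update v i x)) :
    p (update v i x) i = p v i := by
  have hback : update (update v i x) i (v i) = v := by simp
  have hto := hIC.utility_update_le v i x
  have hfrom := hIC.utility_update_le (update v i x) i (v i)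
  rw [hback] at hfrom
  rw [utility_of_mem h, utility_of_mem h'] at hto hfrom
  exact_mod_cast le_antisymm (by linarith) (by linarith)

end SPIC

lemma outcome_payment_update_eq (hIC : SPIC f p) (hIR : SPIR f p) (hNB : SPNB f p)
    (hwin : i ∈ f v → p v i ≤ x) (hlose : i ∉ f v → x ≤ v i) :
    f (update v i x) = f v ∧ p (update v i x) = p v := by
  by_cases h : i ∈ f v
  · have h' := hIC.mem_update hIR h (hwin h)
    obtain ⟨hf, hp⟩ := hNB v i x (iff_of_true h h') (hIC.payment_update_eq h h').symm
    exact ⟨hf.symm, hp.symm⟩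
  · have h' := hIC.notMem_update hIR h (hlose h)
    obtain ⟨hf, hp⟩ := hNB v i x (iff_of_false h h')
      (by rw [hIR.payment_eq_zero h, hIR.payment_eq_zero h'])
    exact ⟨hf.symm, hp.symm⟩

lemma outcome_payment_eq_of_sat (hIC : SPIC f p) (hIR : SPIR f p) (hNB : SPNB f p)
    (hsat : Sat r (p v)) (hlose : ∀ i ∉ f v, r i ≤ v i) : f r = f v ∧ p r = p v := by
  suffices ∀ A : Finset (Fin n), f (A.piecewise r v) = f v ∧ p (A.piecewise r v) = p v by
    simpa using this Finset.univ
  intro A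
  induction A using Finset.induction_on with
  | empty => simp
  | insert j A hjA ih =>
    rw [Finset.piecewise_insert]
    obtain ⟨hf, hp⟩ := ih
    have hstep := outcome_payment_update_eq hIC hIR hNB (i := j) (x := r j)
      (fun _ ↦ hp ▸ hsat j)
      (fun hj ↦ by rw [Finset.piecewise_eq_of_notMem _ _ _ hjA]; exact hlose j (hf ▸ hj))
    exact ⟨hstep.1.trans hf, hstep.2.trans hp⟩

-- Both profiles move to `p v ⊔ p w`.
lemma outcome_payment_eq_of_cross (hIC : SPIC f p) (hIR : SPIR f p) (hNB : SPNB f p)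
    (hv : ∀ i ∉ f v, p w i ≤ v i) (hw : ∀ i ∉ f w, p v i ≤ w i) : f v = f w ∧ p v = p w := by
  have hsup (v w : Fin n → ℝ≥0) (hv : ∀ i ∉ f v, p w i ≤ v i) :
      f (p v ⊔ p w) = f v ∧ p (p v ⊔ p w) = p v :=
    outcome_payment_eq_of_sat hIC hIR hNB (fun i ↦ le_sup_left) fun i hi ↦
      sup_le (by simp [hIR.payment_eq_zero hi]) (hv i hi)
  obtain ⟨hfv, hpv⟩ := hsup v w hv
  obtain ⟨hfw, hpw⟩ := hsup w v hw
  rw [sup_comm] at hfw hpw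
  exact ⟨hfv.symm.trans hfw, hpv.symm.trans hpw⟩

lemma payment_eq_of_outcome_eq (hIC : SPIC f p) (hIR : SPIR f p) (hNB : SPNB f p)
    (h : f v = f w) : p v = p w :=
  (outcome_payment_eq_of_cross hIC hIR hNB
    (fun i hi ↦ by simp [hIR.payment_eq_zero (h ▸ hi : i ∉ f w)])
    (fun i hi ↦ by simp [hIR.payment_eq_zero (h ▸ hi : i ∉ f v)])).2

lemma outcome_eq_of_sat_of_sat (hIC : SPIC f p) (hIR : SPIR f p) (hNB : SPNB f p)
    (hv : Sat v (p w)) (hw : Sat w (p v)) : f v = f w :=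
  (outcome_payment_eq_of_cross hIC hIR hNB (fun i _ ↦ hv i) (fun i _ ↦ hw i)).1

variable (f p)

-- The dummy value `0` for outcomes outside the range of `f` keeps losers paying nothing.
open Classical in
noncomputable def outcomePayment (S : Finset (Fin n)) : Fin n → ℝ≥0 :=
  if S ∈ Set.range f then p (invFun f S) else 0

open Classical in
noncomputable def exceptionList (Feas : Finset (Finset (Fin n))) (S : Finset (Fin n)) :
    Finset (Finset (Fin n)) :=
  Feas.filter fun T ↦ T ≠ S ∧ ∃ w, f w = T ∧ Sat w (outcomePayment f p S)

def Fires (q : Finset (Fin n) → Fin n → ℝ≥0) (E : Finset (Fin n) → Finset (Finset (Fin n)))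
    (v : Fin n → ℝ≥0) (S : Finset (Fin n)) : Prop :=
  Sat v (q S) ∧ ∀ T ∈ E S, ¬ Sat v (q T)

variable {f p}

lemma outcomePayment_outcome (hIC : SPIC f p) (hIR : SPIR f p) (hNB : SPNB f p)
    (v : Fin n → ℝ≥0) : outcomePayment f p (f v) = p v := by
  rw [outcomePayment, if_pos ⟨v, rfl⟩]
  exact payment_eq_of_outcome_eq hIC hIR hNB (invFun_eq ⟨v, rfl⟩)

lemma outcomePayment_eq_zero (hIR : SPIR f p) {S : Finset (Fin n)} (h : i ∉ S) :
    outcomePayment f p S i = 0 := by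
  unfold outcomePayment
  split_ifs with hS
  · exact hIR.payment_eq_zero ((invFun_eq hS).symm ▸ h)
  · rfl

open Classical in
lemma mem_exceptionList {Feas : Finset (Finset (Fin n))} {S T : Finset (Fin n)} :
    T ∈ exceptionList f p Feas S ↔
      T ∈ Feas ∧ T ≠ S ∧ ∃ w, f w = T ∧ Sat w (outcomePayment f p S) :=
  Finset.mem_filter

lemma fires_iff {Feas : Finset (Finset (Fin n))} (hfeas : ∀ v, f v ∈ Feas)
    (hIC : SPIC f p) (hIR : SPIR f p) (hNB : SPNB f p) {S : Finset (Fin n)} :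
    Fires (outcomePayment f p) (exceptionList f p Feas) v S ↔ S = f v := by
  constructor
  · rintro ⟨hsat, hexc⟩
    by_contra hne
    refine hexc (f v) (mem_exceptionList.mpr ⟨hfeas v, Ne.symm hne, v, rfl, hsat⟩) ?_
    rw [outcomePayment_outcome hIC hIR hNB]
    exact hIR.sat v
  · rintro rfl
    refine ⟨(outcomePayment_outcome hIC hIR hNB v).symm ▸ hIR.sat v, ?_⟩
    intro T hT hsat
    obtain ⟨-, hne, w, rfl, hw⟩ := mem_exceptionList.mp hT
    rw [outcomePayment_outcome hIC hIR hNB] at hsat hw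
    exact hne (outcome_eq_of_sat_of_sat hIC hIR hNB hw hsat)

end Mechanism

/-- Decision-list characterization: an IC, IR, nonbossy mechanism in a
single-parameter environment with feasible outcomes `Feas` (of size `k`) is a
decision list: there are payment vectors `q o` (zero on agents not served by
`o`), exception lists `E o ⊆ Feas`, and an enumeration `o⁽¹⁾, …, o⁽ᵏ⁾` of `Feas`
such that for every `v`, the mechanism outputs the first outcome `o⁽ʲ⁾` that `v`
satisfies whose exception list contains no outcome satisfied by `v`, charging
`q (o⁽ʲ⁾)`; moreover the exception lists can be chosen so that the order is
irrelevant, i.e. exactly one index meets this condition. -/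
theorem decisionList_characterization (n : ℕ) (Feas : Finset (Finset (Fin n)))
    (f : (Fin n → ℝ≥0) → Finset (Fin n)) (p : (Fin n → ℝ≥0) → Fin n → ℝ≥0)
    (hfeas : ∀ v, f v ∈ Feas)
    (hIC : SPIC f p) (hIR : SPIR f p) (hNB : SPNB f p) :
    ∃ (q : Finset (Fin n) → Fin n → ℝ≥0)
      (E : Finset (Fin n) → Finset (Finset (Fin n)))
      (o : Fin Feas.card → Finset (Fin n)),
      -- losers pay nothing
      (∀ S : Finset (Fin n), ∀ i, i ∉ S → q S i = 0) ∧
      -- exception lists consist of feasible outcomes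
      (∀ S : Finset (Fin n), E S ⊆ Feas) ∧
      -- `o` enumerates the feasible outcomes
      (∀ j, o j ∈ Feas) ∧ Function.Injective o ∧
      -- the mechanism agrees with the decision list, and exactly one entry of
      -- the list fires (so the order of the list does not matter)
      (∀ v : Fin n → ℝ≥0, ∃ j : Fin Feas.card,
        (Sat v (q (o j)) ∧ ∀ S ∈ E (o j), ¬ Sat v (q S)) ∧
        (∀ j' : Fin Feas.card,
          (Sat v (q (o j')) ∧ ∀ S ∈ E (o j'), ¬ Sat v (q S)) → j' = j) ∧
        f v = o j ∧ p v = q (o j)) := by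
  let o : Fin Feas.card → Finset (Fin n) := fun j ↦ Feas.equivFin.symm j
  have ho : Injective o := Subtype.val_injective.comp Feas.equivFin.symm.injective
  have hfires (v) (S) := fires_iff (v := v) (S := S) hfeas hIC hIR hNB
  refine ⟨outcomePayment f p, exceptionList f p Feas, o,
    fun S i ↦ outcomePayment_eq_zero hIR, fun S T hT ↦ (mem_exceptionList.mp hT).1,
    fun j ↦ (Feas.equivFin.symm j).2, ho, fun v ↦ ?_⟩
  have hov : o (Feas.equivFin ⟨f v, hfeas v⟩) = f v := by simp [o]
  refine ⟨Feas.equivFin ⟨f v, hfeas v⟩, (hfires v _).2 hov, fun j' hj' ↦ ho ?_, hov.symm, ?_⟩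
  · rw [hov]
    exact (hfires v _).1 hj'
  · rw [hov, outcomePayment_outcome hIC hIR hNB]
end

section
/- Full surplus extraction with binary supports: let 𝒪 ⊆ {0,1}ⁿ be a downward-closed feasible outcome set containing the all-zero outcome, and let a ∈ (ℝ≥0)ⁿ. Then there exists a mechanism M = (f, p) on the full domain 𝒱 = (ℝ≥0)ⁿ that is incentive-compatible, individually rational, and nonbossy, such that: (i) for every v ∈ (ℝ≥0)ⁿ with vᵢ ∈ {0, aᵢ} for all i, the revenue Σᵢ pᵢ(v) equals the optimal welfare max_{o ∈ 𝒪} Σᵢ vᵢ·oᵢ; and (ii) the revenue is weakly monotone in the values: if vᵢ ≤ vᵢ' for all i, then Σᵢ pᵢ(v) ≤ Σᵢ pᵢ(v'). -/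
open Function NNReal

/-!
Call agent `i` active when `a i ≤ v i`. The mechanism serves a feasible set of active agents of
maximal `a`-weight and charges each winner the posted price `a i`. At binary `v` the active agents
are exactly those with `v i = a i`, so revenue equals optimal welfare; revenue is monotone because
the active set is. Posted prices give IC and IR. Nonbossiness needs that a losing agent can leave
or join the active set without changing the chosen set: this holds because the optimum is the
maximizer of a fixed strict order (weight first, then an enumeration of all sets), and maximizers
of a strict order are independent of irrelevant alternatives.
-/

open Finset

namespace BinarySupport

section ArgmaxOn

variable {α β : Type*} [LinearOrder β]

noncomputable def argmaxOn (k : α → β) (X : Finset α) (hX : X.Nonempty) : α :=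
  (X.exists_max_image k hX).choose

variable {k : α → β} {X Y : Finset α}

lemma argmaxOn_mem (hX : X.Nonempty) : argmaxOn k X hX ∈ X :=
  (X.exists_max_image k hX).choose_spec.1

lemma le_argmaxOn (hX : X.Nonempty) {x : α} (hx : x ∈ X) : k x ≤ k (argmaxOn k X hX) :=
  (X.exists_max_image k hX).choose_spec.2 x hx

lemma argmaxOn_eq_of_subset (hk : Injective k) (hXY : X ⊆ Y) (hY : Y.Nonempty)
    (h : argmaxOn k Y hY ∈ X) : argmaxOn k X ⟨_, h⟩ = argmaxOn k Y hY :=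
  hk <| le_antisymm (le_argmaxOn hY (hXY (argmaxOn_mem _))) (le_argmaxOn _ h)

end ArgmaxOn

variable {n : ℕ}

section Allocation

variable (Feas : Finset (Finset (Fin n))) (a : Fin n → ℝ≥0)

noncomputable def tieBrokenWeight (S : Finset (Fin n)) :
    ℝ≥0 ×ₗ Fin (Fintype.card (Finset (Fin n))) :=
  toLex (∑ i ∈ S, a i, Fintype.equivFin _ S)

lemma tieBrokenWeight_injective : Injective (tieBrokenWeight a) := fun _ _ h =>
  (Fintype.equivFin _).injective (congrArg Prod.snd (toLex.injective h))

def feasibleWithin (A : Finset (Fin n)) : Finset (Finset (Fin n)) := Feas.filter (· ⊆ A)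

variable {Feas} in
lemma mem_feasibleWithin {A S : Finset (Fin n)} :
    S ∈ feasibleWithin Feas A ↔ S ∈ Feas ∧ S ⊆ A :=
  mem_filter

variable (hempty : (∅ : Finset (Fin n)) ∈ Feas)

noncomputable def optAlloc (A : Finset (Fin n)) : Finset (Fin n) :=
  argmaxOn (tieBrokenWeight a) (feasibleWithin Feas A)
    ⟨∅, mem_feasibleWithin.2 ⟨hempty, empty_subset A⟩⟩

lemma optAlloc_mem_feasibleWithin (A : Finset (Fin n)) :
    optAlloc Feas a hempty A ∈ feasibleWithin Feas A :=
  argmaxOn_mem _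

lemma optAlloc_mem (A : Finset (Fin n)) : optAlloc Feas a hempty A ∈ Feas :=
  (mem_feasibleWithin.1 (optAlloc_mem_feasibleWithin Feas a hempty A)).1

lemma optAlloc_subset (A : Finset (Fin n)) : optAlloc Feas a hempty A ⊆ A :=
  (mem_feasibleWithin.1 (optAlloc_mem_feasibleWithin Feas a hempty A)).2

lemma sum_le_sum_optAlloc {A S : Finset (Fin n)} (hS : S ∈ Feas) (hSA : S ⊆ A) :
    ∑ i ∈ S, a i ≤ ∑ i ∈ optAlloc Feas a hempty A, a i :=
  Prod.Lex.monotone_fst _ _ (le_argmaxOn _ (mem_feasibleWithin.2 ⟨hS, hSA⟩) :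
    tieBrokenWeight a S ≤ tieBrokenWeight a (optAlloc Feas a hempty A))

lemma sum_optAlloc_mono {A B : Finset (Fin n)} (hAB : A ⊆ B) :
    ∑ i ∈ optAlloc Feas a hempty A, a i ≤ ∑ i ∈ optAlloc Feas a hempty B, a i :=
  sum_le_sum_optAlloc Feas a hempty (optAlloc_mem Feas a hempty A)
    ((optAlloc_subset Feas a hempty A).trans hAB)

lemma optAlloc_erase {A : Finset (Fin n)} {i : Fin n} (hi : i ∉ optAlloc Feas a hempty A) :
    optAlloc Feas a hempty (A.erase i) = optAlloc Feas a hempty A := by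
  refine argmaxOn_eq_of_subset (tieBrokenWeight_injective a) ?_ _ ?_
  · exact fun S hS => mem_feasibleWithin.2
      ⟨(mem_feasibleWithin.1 hS).1, (mem_feasibleWithin.1 hS).2.trans (erase_subset i A)⟩
  · exact mem_feasibleWithin.2 ⟨optAlloc_mem Feas a hempty A, fun j hj =>
      mem_erase.2 ⟨ne_of_mem_of_not_mem hj hi, optAlloc_subset Feas a hempty A hj⟩⟩

end Allocation

section PostedPrice

noncomputable def activeSet (a v : Fin n → ℝ≥0) : Finset (Fin n) :=
  univ.filter fun i => a i ≤ v i

variable {a : Fin n → ℝ≥0}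

@[simp]
lemma mem_activeSet {v : Fin n → ℝ≥0} {i : Fin n} : i ∈ activeSet a v ↔ a i ≤ v i := by
  simp [activeSet]

lemma activeSet_mono {v v' : Fin n → ℝ≥0} (h : ∀ i, v i ≤ v' i) :
    activeSet a v ⊆ activeSet a v' := fun i hi =>
  mem_activeSet.2 ((mem_activeSet.1 hi).trans (h i))

lemma activeSet_update_of_iff {v : Fin n → ℝ≥0} {i : Fin n} {x : ℝ≥0}
    (h : a i ≤ x ↔ a i ≤ v i) :
    activeSet a (update v i x) = activeSet a v := by
  ext j
  rcases eq_or_ne j i with rfl | hj <;> simp [*]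

lemma erase_activeSet_update (v : Fin n → ℝ≥0) (i : Fin n) (x : ℝ≥0) :
    (activeSet a (update v i x)).erase i = (activeSet a v).erase i := by
  ext j
  rcases eq_or_ne j i with rfl | hj <;> simp [*]

variable (a)

noncomputable def postedPayment (S : Finset (Fin n)) (i : Fin n) : ℝ≥0 :=
  if i ∈ S then a i else 0

lemma utility_postedPayment (vi : ℝ≥0) (i : Fin n) (S : Finset (Fin n)) :
    utility vi i S (postedPayment a S i) = if i ∈ S then (vi : ℝ) - a i else 0 := by
  unfold utility postedPayment
  split_ifs <;> simp

lemma sum_postedPayment (S : Finset (Fin n)) : ∑ i, postedPayment a S i = ∑ i ∈ S, a i := by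
  simp [postedPayment, sum_ite_mem]

variable (sel : Finset (Fin n) → Finset (Fin n))

lemma spir_postedPayment (hsel : ∀ A, sel A ⊆ A) :
    SPIR (fun v => sel (activeSet a v)) (fun v => postedPayment a (sel (activeSet a v))) := by
  intro v i
  rw [utility_postedPayment]
  split_ifs with hi
  · exact sub_nonneg.2 (NNReal.coe_le_coe.2 (mem_activeSet.1 (hsel _ hi)))
  · exact le_rfl

lemma spic_postedPayment (hsel : ∀ A, sel A ⊆ A) :
    SPIC (fun v => sel (activeSet a v)) (fun v => postedPayment a (sel (activeSet a v))) := by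
  intro v i x
  beta_reduce
  by_cases hdev : i ∈ sel (activeSet a (update v i x))
  · have hx : a i ≤ x := by simpa using hsel _ hdev
    by_cases hv : a i ≤ v i
    · rw [activeSet_update_of_iff (iff_of_true hx hv)]
      exact Or.inr ⟨rfl, id⟩
    · have hi : i ∉ sel (activeSet a v) := fun hi => hv (mem_activeSet.1 (hsel _ hi))
      left
      simp only [utility_postedPayment, hi, hdev, if_true, if_false]
      exact sub_neg.2 (NNReal.coe_lt_coe.2 (not_le.1 hv))
  · have htruth := spir_postedPayment a sel hsel v i
    simp only [utility_postedPayment, if_neg hdev] at htruth ⊢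
    exact htruth.lt_or_eq.imp id fun h => ⟨h.symm, fun h' => absurd h' hdev⟩

lemma spnb_postedPayment (hsel : ∀ A, sel A ⊆ A)
    (herase : ∀ A i, i ∉ sel A → sel (A.erase i) = sel A) :
    SPNB (fun v => sel (activeSet a v)) (fun v => postedPayment a (sel (activeSet a v))) := by
  intro v i x hiff _
  suffices h : sel (activeSet a v) = sel (activeSet a (update v i x)) from
    ⟨h, congrArg (postedPayment a) h⟩
  by_cases hi : i ∈ sel (activeSet a v)
  · have hv : a i ≤ v i := mem_activeSet.1 (hsel _ hi)
    have hx : a i ≤ x := by simpa using hsel _ (hiff.1 hi)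
    rw [activeSet_update_of_iff (iff_of_true hx hv)]
  · calc sel (activeSet a v) = sel ((activeSet a v).erase i) := (herase _ _ hi).symm
      _ = sel ((activeSet a (update v i x)).erase i) := by rw [erase_activeSet_update]
      _ = sel (activeSet a (update v i x)) := herase _ _ (mt hiff.2 hi)

end PostedPrice

lemma sum_eq_sum_inter_activeSet {a v : Fin n → ℝ≥0} (hv : ∀ i, v i = 0 ∨ v i = a i)
    (S : Finset (Fin n)) : ∑ i ∈ S, v i = ∑ i ∈ S ∩ activeSet a v, a i := by
  rw [← filter_mem_eq_inter, sum_filter]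
  refine sum_congr rfl fun i _ => ?_
  rcases hv i with h | h <;> by_cases ha : a i = 0 <;> simp_all

lemma sum_optAlloc_activeSet_of_binary (Feas : Finset (Finset (Fin n)))
    (hdc : ∀ S ∈ Feas, ∀ T : Finset (Fin n), T ⊆ S → T ∈ Feas)
    (hempty : (∅ : Finset (Fin n)) ∈ Feas) {a v : Fin n → ℝ≥0}
    (hv : ∀ i, v i = 0 ∨ v i = a i) :
    ∑ i ∈ optAlloc Feas a hempty (activeSet a v), a i =
      Feas.sup' ⟨∅, hempty⟩ (fun S => ∑ i ∈ S, v i) := by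
  refine le_antisymm ?_ (sup'_le _ _ fun S hS => ?_)
  · calc ∑ i ∈ optAlloc Feas a hempty (activeSet a v), a i
        = ∑ i ∈ optAlloc Feas a hempty (activeSet a v), v i := by
          rw [sum_eq_sum_inter_activeSet hv, inter_eq_left.2 (optAlloc_subset Feas a hempty _)]
      _ ≤ _ := le_sup' (fun S => ∑ i ∈ S, v i) (optAlloc_mem Feas a hempty _)
  · rw [sum_eq_sum_inter_activeSet hv]
    exact sum_le_sum_optAlloc Feas a hempty (hdc S hS _ inter_subset_left) inter_subset_right

end BinarySupport

open BinarySupport in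
/-- Full surplus extraction with binary supports: for any downward-closed
feasible set `Feas` containing the empty outcome, and any `a : Fin n → ℝ≥0`,
there is an IC, IR, nonbossy mechanism whose revenue equals the optimal welfare
at every valuation vector with `v i ∈ {0, a i}` for every `i`, and whose
revenue is weakly monotone in the values. -/
theorem binarySupport_fullExtraction (n : ℕ) (Feas : Finset (Finset (Fin n)))
    (hdc : ∀ S ∈ Feas, ∀ T : Finset (Fin n), T ⊆ S → T ∈ Feas)
    (hempty : (∅ : Finset (Fin n)) ∈ Feas)
    (a : Fin n → ℝ≥0) :
    ∃ (f : (Fin n → ℝ≥0) → Finset (Fin n)) (p : (Fin n → ℝ≥0) → Fin n → ℝ≥0),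
      (∀ v, f v ∈ Feas) ∧ SPIC f p ∧ SPIR f p ∧ SPNB f p ∧
      (∀ v : Fin n → ℝ≥0, (∀ i, v i = 0 ∨ v i = a i) →
        ∑ i, p v i = Feas.sup' ⟨∅, hempty⟩ (fun S => ∑ i ∈ S, v i)) ∧
      (∀ v v' : Fin n → ℝ≥0, (∀ i, v i ≤ v' i) → ∑ i, p v i ≤ ∑ i, p v' i) := by
  have hsel := optAlloc_subset Feas a hempty
  refine ⟨fun v => optAlloc Feas a hempty (activeSet a v),
    fun v => postedPayment a (optAlloc Feas a hempty (activeSet a v)),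
    fun v => optAlloc_mem Feas a hempty _,
    spic_postedPayment a _ hsel, spir_postedPayment a _ hsel,
    spnb_postedPayment a _ hsel fun _ _ => optAlloc_erase Feas a hempty, fun v hv => ?_,
    fun v v' hle => ?_⟩
  · rw [sum_postedPayment]
    exact sum_optAlloc_activeSet_of_binary Feas hdc hempty hv
  · simp only [sum_postedPayment]
    exact sum_optAlloc_mono Feas a hempty (activeSet_mono hle)
end

section
/- Posted-price upper bound under correlation: consider two agents with correlated values distributed as (v₁, v₂) = (1, 1) with probability 1/5, (2, 0) with probability 2/5, and (0, 2) with probability 2/5, and no feasibility constraint (any subset of agents may receive an item). Every sequential posted-price mechanism has expected revenue at most 8/5. -/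
/-!
The distribution is symmetric in the two agents, so the order does not matter, and the
argument splits on where the first price `q` lies relative to the values `0, 1, 2`. If `q ≤ 0` or `q > 2`
the first agent contributes nothing positive and the second faces a single price against the
values `1` (mass `1/5`) and `2` (mass `2/5`), worth at most `max (3/5) (4/5) = 4/5`. If
`0 < q ≤ 1`, no one pays more than their value and the first agent pays at most `1` even at
`(2, 0)`, giving `2/5 + 2/5 + 4/5`. If `1 < q ≤ 2`, the first agent earns at most `2` at
`(2, 0)` and the second again faces a single price on `(1, 1)` and `(0, 2)`.
-/

/-- Revenue of a sequential posted-price mechanism on two agents at the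
valuation vector `v`: agent `first` is offered price `q1`; the other agent is
then offered `qacc` if the first accepted and `qrej` otherwise; each agent buys
iff their value is at least the offered price, paying the price, and pays `0`
otherwise. -/
noncomputable def ppRevenue (first : Fin 2) (q1 qacc qrej : ℝ)
    (v : Fin 2 → ℝ) : ℝ :=
  let second : Fin 2 := if first = 0 then 1 else 0
  let pay1 : ℝ := if q1 ≤ v first then q1 else 0
  let price2 : ℝ := if q1 ≤ v first then qacc else qrej
  let pay2 : ℝ := if price2 ≤ v second then price2 else 0
  pay1 + pay2

noncomputable def postedPayment (p x : ℝ) : ℝ := if p ≤ x then p else 0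

theorem postedPayment_of_le {p x : ℝ} (h : p ≤ x) : postedPayment p x = p := if_pos h

theorem postedPayment_of_lt {p x : ℝ} (h : x < p) : postedPayment p x = 0 := if_neg h.not_ge

theorem postedPayment_le {p x : ℝ} (hx : 0 ≤ x) : postedPayment p x ≤ x := by
  unfold postedPayment
  split_ifs with h
  exacts [h, hx]

theorem weighted_postedPayment_le_max {p x y α β : ℝ} (hx : x ≤ y) (hα : 0 ≤ α) (hβ : 0 ≤ β)
    (hβy : 0 ≤ β * y) :
    α * postedPayment p x + β * postedPayment p y ≤ max ((α + β) * x) (β * y) := by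
  rcases le_or_gt p x with hpx | hxp
  · rw [postedPayment_of_le hpx, postedPayment_of_le (hpx.trans hx), ← add_mul]
    exact le_max_of_le_left (mul_le_mul_of_nonneg_left hpx (add_nonneg hα hβ))
  rcases le_or_gt p y with hpy | hyp
  · rw [postedPayment_of_lt hxp, postedPayment_of_le hpy, mul_zero, zero_add]
    exact le_max_of_le_right (mul_le_mul_of_nonneg_left hpy hβ)
  · rw [postedPayment_of_lt hxp, postedPayment_of_lt hyp]
    simpa using le_max_of_le_right hβy

theorem postedPayment_one_two_le (p : ℝ) :
    1 / 5 * postedPayment p 1 + 2 / 5 * postedPayment p 2 ≤ 4 / 5 :=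
  (weighted_postedPayment_le_max (by norm_num) (by norm_num) (by norm_num) (by norm_num)).trans
    (by norm_num)

noncomputable def sequentialRevenue (q a r x y : ℝ) : ℝ :=
  postedPayment q x + postedPayment (if q ≤ x then a else r) y

theorem ppRevenue_zero (q a r : ℝ) (v : Fin 2 → ℝ) :
    ppRevenue 0 q a r v = sequentialRevenue q a r (v 0) (v 1) := by
  simp [ppRevenue, sequentialRevenue, postedPayment]

theorem ppRevenue_one (q a r : ℝ) (v : Fin 2 → ℝ) :
    ppRevenue 1 q a r v = sequentialRevenue q a r (v 1) (v 0) := by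
  simp [ppRevenue, sequentialRevenue, postedPayment]

theorem sequentialRevenue_expectation_le (q a r : ℝ) :
    1 / 5 * sequentialRevenue q a r 1 1 + 2 / 5 * sequentialRevenue q a r 2 0
      + 2 / 5 * sequentialRevenue q a r 0 2 ≤ 8 / 5 := by
  have hpay₀ (p : ℝ) : postedPayment p 0 ≤ 0 := postedPayment_le le_rfl
  unfold sequentialRevenue
  rcases le_or_gt q 0 with hq0 | hq0
  · simp only [hq0.trans zero_le_one, hq0.trans zero_le_two, hq0, if_true,
      postedPayment_of_le]
    linarith [postedPayment_one_two_le a, hpay₀ a]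
  rcases le_or_gt q 1 with hq1 | hq1
  · simp only [hq1, hq1.trans one_le_two, hq0.not_ge, if_true, if_false,
      postedPayment_of_le, postedPayment_of_lt hq0]
    linarith [postedPayment_le (p := a) zero_le_one, postedPayment_le (p := r) zero_le_two,
      hpay₀ a]
  rcases le_or_gt q 2 with hq2 | hq2
  · simp only [hq2, hq1.not_ge, hq0.not_ge, if_true, if_false, postedPayment_of_le,
      postedPayment_of_lt hq0, postedPayment_of_lt hq1]
    linarith [postedPayment_one_two_le r, hpay₀ a]
  · simp only [hq2.not_ge, (one_lt_two.trans hq2).not_ge, hq0.not_ge, if_false,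
      postedPayment_of_lt hq0, postedPayment_of_lt hq2, postedPayment_of_lt (one_lt_two.trans hq2)]
    linarith [postedPayment_one_two_le r, hpay₀ r]

theorem postedPrice_revenue_le_general (first : Fin 2) (q1 qacc qrej : ℝ) :
    (1 / 5) * ppRevenue first q1 qacc qrej ![1, 1]
      + (2 / 5) * ppRevenue first q1 qacc qrej ![2, 0]
      + (2 / 5) * ppRevenue first q1 qacc qrej ![0, 2] ≤ 8 / 5 := by
  have h := sequentialRevenue_expectation_le q1 qacc qrej
  fin_cases first
  · simpa [ppRevenue_zero] using h
  · simp only [Fin.mk_one, ppRevenue_one, Matrix.cons_val_one, Matrix.cons_val_zero]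
    linarith

/-- Every sequential posted-price mechanism extracts expected revenue at most
`8/5` from the correlated distribution putting mass `1/5` on values `(1,1)`,
`2/5` on `(2,0)` and `2/5` on `(0,2)`. -/
theorem postedPrice_revenue_le (first : Fin 2) (q1 qacc qrej : ℝ)
    (hq1 : 0 ≤ q1) (hqacc : 0 ≤ qacc) (hqrej : 0 ≤ qrej) :
    (1 / 5) * ppRevenue first q1 qacc qrej ![1, 1]
      + (2 / 5) * ppRevenue first q1 qacc qrej ![2, 0]
      + (2 / 5) * ppRevenue first q1 qacc qrej ![0, 2] ≤ 8 / 5 :=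
  postedPrice_revenue_le_general first q1 qacc qrej
end
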